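/- Let G be an oriented graph on n vertices with underlying minimum degree δ(G) ≥ n/2 + 1, let C = v_1...v_{n-1}v_1 be a cycle in G with σ^-(C) ≤ ℓ − 2, and let w be the unique vertex outside C. Then G contains a Hamilton cycle C* with σ^-(C*) ≤ ℓ, obtained by inserting w between two consecutive cycle vertices that are both neighbours of w. -/

import Mathlib

open Function

/-- An oriented graph: an asymmetric (hence irreflexive) relation, i.e. no 2-cycles. -/
def Oriented {V : Type*} (E : V → V → Prop) : Prop := ∀ u v, E u v → ¬ E v u

/-- Adjacency in the underlying undirected graph. -/
def UAdj {V : Type*} (E : V → V → Prop) (u v : V) : Prop := E u v ∨ E v u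

/-- Degree of a vertex in the underlying undirected graph. -/
noncomputable def udeg {V : Type*} (E : V → V → Prop) (x : V) : ℕ := Nat.card {y : V // UAdj E x y}

/-- Cyclic successor of an index. -/
def cnext {m : ℕ} (i : Fin m) : Fin m := ⟨(i.val + 1) % m, Nat.mod_lt _ i.pos⟩

/-- A Hamilton cycle of an oriented graph on `Fin n`, given as a cyclic listing of
all vertices (consecutive vertices, when distinct, are joined by an edge). -/
def IsHamCycle {n : ℕ} (E : Fin n → Fin n → Prop) (c : Fin n → Fin n) : Prop :=
  Bijective c ∧ ∀ i : Fin n, c i ≠ c (cnext i) → UAdj E (c i) (c (cnext i))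

/-- Number of forward edges of a Hamilton cycle. -/
noncomputable def sigmaPlusHC {n : ℕ} (E : Fin n → Fin n → Prop) (c : Fin n → Fin n) : ℕ :=
  Nat.card {i : Fin n // E (c i) (c (cnext i))}

/-- Number of backward edges of a Hamilton cycle. -/
noncomputable def sigmaMinusHC {n : ℕ} (E : Fin n → Fin n → Prop) (c : Fin n → Fin n) : ℕ :=
  Nat.card {i : Fin n // E (c (cnext i)) (c i)}

noncomputable def sigmaMaxHC {n : ℕ} (E : Fin n → Fin n → Prop) (c : Fin n → Fin n) : ℕ :=
  max (sigmaPlusHC E c) (sigmaMinusHC E c)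

noncomputable def sigmaMinHC {n : ℕ} (E : Fin n → Fin n → Prop) (c : Fin n → Fin n) : ℕ :=
  min (sigmaPlusHC E c) (sigmaMinusHC E c)

/-- A (not necessarily spanning) cycle on `m` vertices in an oriented graph on `Fin n`. -/
def IsCycleOn {n m : ℕ} (E : Fin n → Fin n → Prop) (c : Fin m → Fin n) : Prop :=
  3 ≤ m ∧ Injective c ∧ ∀ i : Fin m, UAdj E (c i) (c (cnext i))

noncomputable def sigmaPlusCyc {n m : ℕ} (E : Fin n → Fin n → Prop) (c : Fin m → Fin n) : ℕ :=
  Nat.card {i : Fin m // E (c i) (c (cnext i))}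

noncomputable def sigmaMinusCyc {n m : ℕ} (E : Fin n → Fin n → Prop) (c : Fin m → Fin n) : ℕ :=
  Nat.card {i : Fin m // E (c (cnext i)) (c i)}

noncomputable def sigmaMaxCyc {n m : ℕ} (E : Fin n → Fin n → Prop) (c : Fin m → Fin n) : ℕ :=
  max (sigmaPlusCyc E c) (sigmaMinusCyc E c)

noncomputable def sigmaMinCyc {n m : ℕ} (E : Fin n → Fin n → Prop) (c : Fin m → Fin n) : ℕ :=
  min (sigmaPlusCyc E c) (sigmaMinusCyc E c)

/-- A path on `m + 1` vertices (`m` edges) in an oriented graph on `Fin n`. -/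
def IsPathOn {n m : ℕ} (E : Fin n → Fin n → Prop) (p : Fin (m + 1) → Fin n) : Prop :=
  Injective p ∧ ∀ i : Fin m, UAdj E (p i.castSucc) (p i.succ)

noncomputable def sigmaPlusPath {n m : ℕ} (E : Fin n → Fin n → Prop) (p : Fin (m + 1) → Fin n) : ℕ :=
  Nat.card {i : Fin m // E (p i.castSucc) (p i.succ)}

noncomputable def sigmaMinusPath {n m : ℕ} (E : Fin n → Fin n → Prop) (p : Fin (m + 1) → Fin n) : ℕ :=
  Nat.card {i : Fin m // E (p i.succ) (p i.castSucc)}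

noncomputable def sigmaMaxPath {n m : ℕ} (E : Fin n → Fin n → Prop) (p : Fin (m + 1) → Fin n) : ℕ :=
  max (sigmaPlusPath E p) (sigmaMinusPath E p)

noncomputable def sigmaMinPath {n m : ℕ} (E : Fin n → Fin n → Prop) (p : Fin (m + 1) → Fin n) : ℕ :=
  min (sigmaPlusPath E p) (sigmaMinusPath E p)

/-! The neighbours of `w` all lie on `C`, and there are more than `|C| / 2` of them, so two of
them are consecutive on `C`, say `c i` and `c (i + 1)`. Rotating `C` to start at `c (i + 1)` and
appending `w` gives a Hamilton cycle whose only edges off `C` are `c i w` and `w c (i + 1)`, so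
`σ⁻` grows by at most two. -/

open Finset

section CyclicIndex

variable {m : ℕ}

lemma cnext_eq_add_one [NeZero m] (i : Fin m) : cnext i = i + 1 := by
  ext
  simp [cnext, Fin.val_add, Nat.add_mod_mod]

lemma cnext_eq_zero [NeZero m] {a : Fin m} (h : a.val + 1 = m) : cnext a = 0 := by
  ext
  simp [cnext, h]

lemma cnext_add [NeZero m] (i k : Fin m) : cnext (i + k) = cnext i + k := by
  rw [cnext_eq_add_one, cnext_eq_add_one]
  abel

lemma cnext_injective : Injective (cnext : Fin m → Fin m) := by
  intro a b h
  have : NeZero m := ⟨a.pos.ne'⟩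
  simpa [cnext_eq_add_one] using h

lemma cnext_castSucc {a : Fin m} (h : a.val + 1 < m) : cnext a.castSucc = (cnext a).castSucc := by
  ext
  simp [cnext, Nat.mod_eq_of_lt h, Nat.mod_eq_of_lt (Nat.lt_succ_of_lt h)]

lemma cnext_castSucc_of_val_add_one_eq {a : Fin m} (h : a.val + 1 = m) :
    cnext a.castSucc = Fin.last m := by
  ext
  simp [cnext, h]

lemma cnext_last : cnext (Fin.last m) = 0 := by
  ext
  simp [cnext]

lemma exists_mem_cnext_mem_of_lt_two_mul_card (S : Finset (Fin m)) (hS : m < 2 * #S) :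
    ∃ a ∈ S, cnext a ∈ S := by
  by_contra! h
  have hdisj : Disjoint S (S.map ⟨cnext, cnext_injective⟩) := by
    rw [disjoint_right]
    rintro _ hb ha
    obtain ⟨a, haS, rfl⟩ := mem_map.mp hb
    exact h a haS ha
  have hcard := (card_le_univ (S ∪ S.map ⟨cnext, cnext_injective⟩)).trans_eq
    (Fintype.card_fin m)
  rw [card_union_of_disjoint hdisj, card_map] at hcard
  omega

end CyclicIndex

section Cycles

variable {n m : ℕ} (E : Fin n → Fin n → Prop)

open Classical in
lemma udeg_le_card_adj_add_one {c : Fin m → Fin n} {w : Fin n}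
    (hcover : ∀ x : Fin n, x = w ∨ ∃ i, c i = x) :
    udeg E w ≤ #{i | UAdj E w (c i)} + 1 := by
  have hsub : ({y | UAdj E w y} : Finset (Fin n)) ⊆
      insert w (({i | UAdj E w (c i)} : Finset (Fin m)).image c) := by
    intro y hy
    rcases hcover y with rfl | ⟨i, rfl⟩
    · exact mem_insert_self _ _
    · exact mem_insert_of_mem (mem_image_of_mem c (by simpa using hy))
  calc udeg E w = #{y | UAdj E w y} := by
        rw [udeg, Nat.card_eq_fintype_card, Fintype.card_subtype]
    _ ≤ #(({i | UAdj E w (c i)} : Finset (Fin m)).image c) + 1 :=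
        (card_le_card hsub).trans (card_insert_le _ _)
    _ ≤ #{i | UAdj E w (c i)} + 1 := by gcongr; exact card_image_le

lemma sigmaMinusCyc_comp_add_right [NeZero m] (c : Fin m → Fin n) (k : Fin m) :
    sigmaMinusCyc E (fun j => c (j + k)) = sigmaMinusCyc E c :=
  Nat.card_congr <| (Equiv.addRight k).subtypeEquiv fun j => by simp [cnext_add]

lemma sigmaMinusCyc_snoc_le (d : Fin m → Fin n) (w : Fin n) :
    sigmaMinusCyc E (Fin.snoc d w : Fin (m + 1) → Fin n) ≤ sigmaMinusCyc E d + 2 := by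
  classical
  set D : Fin (m + 1) → Fin n := Fin.snoc d w
  have hsub : ({j | E (D (cnext j)) (D j)} : Finset (Fin (m + 1))) ⊆
      ({a | E (d (cnext a)) (d a)} : Finset (Fin m)).map Fin.castSuccEmb ∪
        {⟨m - 1, by omega⟩, Fin.last m} := by
    intro j hj
    by_cases h : j.val + 1 < m
    · refine mem_union_left _ (mem_map.mpr ⟨⟨j, by omega⟩, ?_, rfl⟩)
      have hj' : j = Fin.castSucc ⟨j, by omega⟩ := rfl
      rw [hj', mem_filter, cnext_castSucc h] at hj
      simpa only [D, Fin.snoc_castSucc, mem_filter, mem_univ, true_and] using hj.2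
    · refine mem_union_right _ ?_
      simp only [mem_insert, mem_singleton, Fin.ext_iff, Fin.val_last]
      omega
  simp only [sigmaMinusCyc, Nat.card_eq_fintype_card, Fintype.card_subtype]
  calc _ ≤ _ := card_le_card hsub
    _ ≤ _ := card_union_le _ _
    _ ≤ _ := by rw [card_map]; gcongr; exact card_le_two

lemma uAdj_snoc_cnext [NeZero m] {d : Fin m → Fin n} {w : Fin n}
    (hd : ∀ a : Fin m, a.val + 1 < m → UAdj E (d a) (d (cnext a)))
    (hlast : ∀ a : Fin m, a.val + 1 = m → UAdj E (d a) w) (hfirst : UAdj E w (d 0))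
    (j : Fin (m + 1)) :
    UAdj E (Fin.snoc (α := fun _ => Fin n) d w j)
      (Fin.snoc (α := fun _ => Fin n) d w (cnext j)) := by
  induction j using Fin.lastCases with
  | last => rwa [cnext_last, ← Fin.castSucc_zero', Fin.snoc_last, Fin.snoc_castSucc]
  | cast a =>
    rcases Nat.lt_or_ge (a.val + 1) m with h | h
    · rw [cnext_castSucc h, Fin.snoc_castSucc, Fin.snoc_castSucc]
      exact hd a h
    · have h : a.val + 1 = m := by omega
      rw [cnext_castSucc_of_val_add_one_eq h, Fin.snoc_castSucc, Fin.snoc_last]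
      exact hlast a h

end Cycles

theorem insert_vertex_into_cycle_general (n ℓ δ : ℕ)
    (E : Fin n → Fin n → Prop)
    (hδlb : ∀ x : Fin n, δ ≤ udeg E x) (hδ : n + 2 ≤ 2 * δ)
    (c : Fin (n - 1) → Fin n) (hc : IsCycleOn E c)
    (w : Fin n) (hw : ∀ i, c i ≠ w)
    (hcover : ∀ x : Fin n, x = w ∨ ∃ i, c i = x)
    (hσC : sigmaMinusCyc E c + 2 ≤ ℓ) :
    ∃ C : Fin n → Fin n, IsHamCycle E C ∧ sigmaMinusHC E C ≤ ℓ := by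
  classical
  generalize hm : n - 1 = m at c hc hw hcover hσC
  obtain rfl : n = m + 1 := by have := w.pos; omega
  obtain ⟨hm3, hinj, hadj⟩ := hc
  have : NeZero m := ⟨by omega⟩
  obtain ⟨i, hwi, hwi'⟩ := exists_mem_cnext_mem_of_lt_two_mul_card {i | UAdj E w (c i)} <| by
    have := (hδlb w).trans (udeg_le_card_adj_add_one E hcover)
    omega
  simp only [mem_filter, mem_univ, true_and] at hwi hwi'
  set d : Fin m → Fin (m + 1) := fun j => c (j + cnext i)
  refine ⟨Fin.snoc d w, ⟨?_, fun j _ => ?_⟩, ?_⟩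
  · exact Finite.injective_iff_bijective.mp <| Fin.snoc_injective_of_injective
      (hinj.comp (add_left_injective _)) (by rintro ⟨j, hj⟩; exact hw _ hj)
  · refine uAdj_snoc_cnext E (fun a _ => ?_) (fun a ha => ?_) (by simpa [d] using hwi') j
    · simpa [d, cnext_add] using hadj (a + cnext i)
    · have hai : a + cnext i = i := by
        rw [cnext_eq_add_one i, add_comm i, ← add_assoc, ← cnext_eq_add_one, cnext_eq_zero ha,
          zero_add]
      simpa [d, hai, UAdj, or_comm] using hwi
  · calc sigmaMinusHC E (Fin.snoc d w) ≤ sigmaMinusCyc E d + 2 := sigmaMinusCyc_snoc_le E d w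
      _ = sigmaMinusCyc E c + 2 := by rw [sigmaMinusCyc_comp_add_right]
      _ ≤ ℓ := hσC

/-- If `δ(G) ≥ n/2 + 1`, `C` is a cycle on `n - 1` vertices with `σ⁻(C) ≤ ℓ - 2`
and `w` is the remaining vertex, then `G` has a Hamilton cycle `C*` with
`σ⁻(C*) ≤ ℓ` (insert `w` between two consecutive neighbours). -/
theorem insert_vertex_into_cycle (n ℓ δ : ℕ)
    (E : Fin n → Fin n → Prop) (hE : Oriented E)
    (hδlb : ∀ x : Fin n, δ ≤ udeg E x) (hδ : n + 2 ≤ 2 * δ)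
    (c : Fin (n - 1) → Fin n) (hc : IsCycleOn E c)
    (w : Fin n) (hw : ∀ i, c i ≠ w)
    (hcover : ∀ x : Fin n, x = w ∨ ∃ i, c i = x)
    (hσC : sigmaMinusCyc E c + 2 ≤ ℓ) :
    ∃ C : Fin n → Fin n, IsHamCycle E C ∧ sigmaMinusHC E C ≤ ℓ :=
  insert_vertex_into_cycle_general n ℓ δ E hδlb hδ c hc w hw hcover hσC
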